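/- arXiv:2008.03362 — 2 statements merged into one kernel-verified Lean document; each statement's English description precedes it below -/
import Mathlib

section
/- Let X be the Cantor set with a free continuous ℤ^d-action and let N ∈ ℕ. Then there exist continuous equivariant maps x ↦ T_i(x), i = 0, 1, ..., 3^d − 1, each taking values in (r, D, E)-tilings of ℤ^d for some r, D, E ∈ ℕ with r > N√d, such that the open sets Ω_i = {x ∈ X : 0 ∈ Dom(T_i(x))} cover X. -/
/-!
Marker lemma: since the action is free and `X` is compact and zero-dimensional, `X` has a finite
cover by clopen sets none of which meets its own translates by the nonzero vectors of the box
`[-6r, 6r]^d`; merging them greedily gives one clopen set `U` with the same property that every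
orbit visits within the box. For each `x` the return times `{c | c +ᵥ x ∈ U}` are then more than
`6r` apart in some coordinate, so they are the centers of an `(r, 2r, 6r)`-tiling, which depends
continuously and equivariantly on `x`. The `3^d` translates of this tiling by `{-4r, 0, 4r}^d`
cover `X`: a return time within `6r` of the origin is moved within `2r` of it by one of them.
-/

open Set Filter Topology

section Marker

variable {G X : Type*} [AddGroup G] [AddAction G X]

def VAddSeparated (F : Set G) (U : Set X) : Prop :=
  ∀ y ∈ U, ∀ g ∈ F, g +ᵥ y ∈ U → g = 0

def vaddShadow (F : Set G) (U : Set X) : Set X :=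
  ⋃ g ∈ F, (g +ᵥ ·) ⁻¹' U

variable {F : Set G} {U W : Set X}

@[simp]
lemma mem_vaddShadow {y : X} : y ∈ vaddShadow F U ↔ ∃ g ∈ F, g +ᵥ y ∈ U := by
  simp [vaddShadow]

lemma subset_vaddShadow (hF0 : (0 : G) ∈ F) : U ⊆ vaddShadow F U :=
  fun y hy => mem_vaddShadow.2 ⟨0, hF0, by rwa [zero_vadd]⟩

lemma vaddShadow_mono (h : U ⊆ W) : vaddShadow F U ⊆ vaddShadow F W :=
  biUnion_mono subset_rfl fun _ _ => preimage_mono h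

lemma VAddSeparated.eq_of_sub_mem (hU : VAddSeparated F U) {x : X} {a b : G}
    (ha : a +ᵥ x ∈ U) (hb : b +ᵥ x ∈ U) (hab : b - a ∈ F) : a = b := by
  have : (b - a) +ᵥ a +ᵥ x ∈ U := by rwa [vadd_vadd, sub_add_cancel]
  exact (sub_eq_zero.1 (hU _ ha _ hab this)).symm

lemma VAddSeparated.union_diff_vaddShadow (hneg : ∀ g ∈ F, -g ∈ F) (hU : VAddSeparated F U)
    (hW : VAddSeparated F W) : VAddSeparated F (U ∪ (W \ vaddShadow F U)) := by
  rintro y (hy | ⟨hyW, hyS⟩) g hg (hgy | ⟨hgyW, hgyS⟩)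
  · exact hU y hy g hg hgy
  · exact absurd (mem_vaddShadow.2 ⟨-g, hneg g hg, by rwa [neg_vadd_vadd]⟩) hgyS
  · exact absurd (mem_vaddShadow.2 ⟨g, hg, hgy⟩) hyS
  · exact hW y hyW g hg hgyW

lemma vaddShadow_union_subset_vaddShadow_union_diff (hF0 : (0 : G) ∈ F) :
    vaddShadow F U ∪ W ⊆ vaddShadow F (U ∪ (W \ vaddShadow F U)) := by
  intro y hy
  by_cases hyS : y ∈ vaddShadow F U
  · exact vaddShadow_mono subset_union_left hyS
  · exact subset_vaddShadow hF0 (Or.inr ⟨hy.resolve_left hyS, hyS⟩)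

variable [TopologicalSpace X] [ContinuousConstVAdd G X]

lemma IsClopen.vaddShadow (hF : F.Finite) (hU : IsClopen U) : IsClopen (vaddShadow F U) :=
  hF.isClopen_biUnion fun g _ => hU.preimage (continuous_const_vadd g)

lemma exists_isClopen_vaddSeparated_biUnion_subset (hF : F.Finite)
    (hF0 : (0 : G) ∈ F) (hneg : ∀ g ∈ F, -g ∈ F) {ι : Type*} {V : ι → Set X}
    (hV : ∀ i, IsClopen (V i)) (hVsep : ∀ i, VAddSeparated F (V i)) (s : Finset ι) :
    ∃ U : Set X, IsClopen U ∧ VAddSeparated F U ∧ ⋃ i ∈ s, V i ⊆ vaddShadow F U := by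
  classical
  induction s using Finset.induction_on with
  | empty => exact ⟨∅, isClopen_empty, fun _ h => h.elim, by simp⟩
  | insert i s _ ih =>
    obtain ⟨U, hUc, hUsep, hsU⟩ := ih
    refine ⟨U ∪ (V i \ vaddShadow F U), hUc.union ((hV i).diff (hUc.vaddShadow hF)),
      hUsep.union_diff_vaddShadow hneg (hVsep i), ?_⟩
    rw [Finset.set_biUnion_insert, union_comm]
    exact (union_subset_union_left _ hsU).trans (vaddShadow_union_subset_vaddShadow_union_diff hF0)

lemma exists_isClopen_mem_vaddSeparated [TotallySeparatedSpace X]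
    (hfree : ∀ (g : G) (x : X), g +ᵥ x = x → g = 0) (hF : F.Finite) (x : X) :
    ∃ U : Set X, IsClopen U ∧ x ∈ U ∧ VAddSeparated F U := by
  have hN : ∀ g : G, ∃ N : Set X, IsClopen N ∧ x ∈ N ∧ ∀ y ∈ N, g +ᵥ y ∈ N → g = 0 := by
    intro g
    by_cases hg : g +ᵥ x = x
    · exact ⟨univ, isClopen_univ, mem_univ x, fun _ _ _ => hfree g x hg⟩
    · obtain ⟨A, hA, hxA, hgxA⟩ := exists_isClopen_of_totally_separated (Ne.symm hg)
      exact ⟨A \ (g +ᵥ ·) ⁻¹' A, hA.diff (hA.preimage (continuous_const_vadd g)), ⟨hxA, hgxA⟩,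
        fun y hy hgy => absurd hgy.1 hy.2⟩
  choose N hNc hxN hNsep using hN
  exact ⟨⋂ g ∈ F, N g, hF.isClopen_biInter fun g _ => hNc g, mem_iInter₂.2 fun g _ => hxN g,
    fun y hy g hg hgy => hNsep g y (mem_iInter₂.1 hy g hg) (mem_iInter₂.1 hgy g hg)⟩

theorem exists_isClopen_vaddSeparated_vaddShadow_eq_univ
    [CompactSpace X] [TotallySeparatedSpace X] (hfree : ∀ (g : G) (x : X), g +ᵥ x = x → g = 0)
    (hF : F.Finite) (hF0 : (0 : G) ∈ F) (hneg : ∀ g ∈ F, -g ∈ F) :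
    ∃ U : Set X, IsClopen U ∧ VAddSeparated F U ∧ vaddShadow F U = univ := by
  choose V hVc hxV hVsep using exists_isClopen_mem_vaddSeparated hfree hF
  obtain ⟨s, hs⟩ := isCompact_univ.elim_finite_subcover V (fun x => (hVc x).isOpen)
    fun x _ => mem_iUnion.2 ⟨x, hxV x⟩
  obtain ⟨U, hUc, hUsep, hsU⟩ :=
    exists_isClopen_vaddSeparated_biUnion_subset hF hF0 hneg hVc hVsep s
  exact ⟨U, hUc, hUsep, eq_univ_of_univ_subset (hs.trans hsU)⟩

lemma IsClopen.eventually_vadd_mem_iff (hU : IsClopen U) (g : G) (x : X) :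
    ∀ᶠ y in 𝓝 x, (g +ᵥ y ∈ U ↔ g +ᵥ x ∈ U) := by
  refine (continuous_const_vadd g).continuousAt.eventually (p := fun z => z ∈ U ↔ g +ᵥ x ∈ U) ?_
  by_cases h : g +ᵥ x ∈ U
  · filter_upwards [hU.isOpen.mem_nhds h] with z hz using iff_of_true hz h
  · filter_upwards [hU.compl.isOpen.mem_nhds h] with z hz using iff_of_false hz h

lemma IsClopen.exists_isOpen_forall_inter_eq (hU : IsClopen U) (s : G)
    {B : Set G} (hB : B.Finite) (x : X) : ∃ V : Set X, IsOpen V ∧ x ∈ V ∧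
      ∀ y ∈ V, {c | (c - s) +ᵥ y ∈ U} ∩ B = {c | (c - s) +ᵥ x ∈ U} ∩ B := by
  obtain ⟨V, hVB, hV, hxV⟩ := eventually_nhds_iff.1 <|
    (eventually_all_finite hB).2 fun c _ => hU.eventually_vadd_mem_iff (c - s) x
  exact ⟨V, hV, hxV, fun y hy => Set.ext fun c => and_congr_left fun hc => hVB y hy c hc⟩

end Marker

section Lattice

variable {ι X : Type*}

lemma abs_le_sqrt_sum_sq [Fintype ι] (v : ι → ℝ) (j : ι) : |v j| ≤ √(∑ i, v i ^ 2) :=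
  Real.abs_le_sqrt (Finset.single_le_sum (fun i _ => sq_nonneg (v i)) (Finset.mem_univ j))

lemma finite_setOf_forall_abs_le [Finite ι] (M : ℤ) : {g : ι → ℤ | ∀ j, |g j| ≤ M}.Finite :=
  (Set.Finite.pi (t := fun _ : ι => Icc (-M) M) fun _ => finite_Icc _ _).subset
    fun _ hg j _ => abs_le.1 (hg j)

lemma finite_setOf_sqrt_sum_sq_le [Fintype ι] (R : ℝ) :
    {n : ι → ℤ | √(∑ j, (n j : ℝ) ^ 2) ≤ R}.Finite :=
  (finite_setOf_forall_abs_le ⌈R⌉).subset fun n hn j => by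
    exact_mod_cast ((abs_le_sqrt_sum_sq (fun j => (n j : ℝ)) j).trans hn).trans (Int.le_ceil R)

/-- `S` is the set of centers of an `(r, D, E)`-tiling, the cube at `c` being the lattice points
`m` with `|m j - c j| ≤ D`. -/
def IsTiling [Fintype ι] (r D E : ℕ) (S : Set (ι → ℤ)) : Prop :=
  (∀ c₁ ∈ S, ∀ c₂ ∈ S, c₁ ≠ c₂ →
    ∀ m : ι → ℤ, ¬ ((∀ j, |m j - c₁ j| ≤ (D : ℤ)) ∧ (∀ j, |m j - c₂ j| ≤ (D : ℤ)))) ∧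
  (∀ c₁ ∈ S, ∀ c₂ ∈ S, c₁ ≠ c₂ →
    ∀ m₁ m₂ : ι → ℤ, (∀ j, |m₁ j - c₁ j| ≤ (D : ℤ)) →
      (∀ j, |m₂ j - c₂ j| ≤ (D : ℤ)) →
      (r : ℝ) ≤ Real.sqrt (∑ j, ((m₁ j - m₂ j : ℤ) : ℝ) ^ 2)) ∧
  (∃ m : ι → ℤ, (∃ c ∈ S, ∀ j, |m j - c j| ≤ (D : ℤ)) ∧ ∀ j, |m j| ≤ (E : ℤ))

lemma isTiling_of_exists_lt_abs_sub [Fintype ι] {r D E M : ℕ} (hM : 2 * D + r ≤ M)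
    {S : Set (ι → ℤ)} (hS : ∀ c₁ ∈ S, ∀ c₂ ∈ S, c₁ ≠ c₂ → ∃ j, (M : ℤ) < |c₁ j - c₂ j|)
    (hE : ∃ c ∈ S, ∀ j, |c j| ≤ (E : ℤ)) : IsTiling r D E S := by
  refine ⟨fun c₁ h₁ c₂ h₂ hne m ⟨hm₁, hm₂⟩ => ?_, fun c₁ h₁ c₂ h₂ hne m₁ m₂ hm₁ hm₂ => ?_, ?_⟩
  · obtain ⟨j, hj⟩ := hS c₁ h₁ c₂ h₂ hne
    have h₁ := abs_le.1 (hm₁ j)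
    have h₂ := abs_le.1 (hm₂ j)
    rw [lt_abs] at hj
    omega
  · obtain ⟨j, hj⟩ := hS c₁ h₁ c₂ h₂ hne
    have hr : (r : ℤ) ≤ |m₁ j - m₂ j| := by
      have h₁ := abs_le.1 (hm₁ j)
      have h₂ := abs_le.1 (hm₂ j)
      rw [lt_abs] at hj
      rw [le_abs]
      omega
    refine le_trans ?_ (abs_le_sqrt_sum_sq (fun j => ((m₁ j - m₂ j : ℤ) : ℝ)) j)
    exact_mod_cast hr
  · obtain ⟨c, hc, hcE⟩ := hE
    exact ⟨c, ⟨c, hc, fun j => by simp⟩, hcE⟩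

def cornerShift (r : ℕ) (k : ι → Fin 3) : ι → ℤ :=
  fun j => 4 * r * ((k j : ℤ) - 1)

lemma exists_abs_add_cornerShift_le (r : ℕ) {n : ι → ℤ} (hn : ∀ j, |n j| ≤ ((6 * r : ℕ) : ℤ)) :
    ∃ k : ι → Fin 3, ∀ j, |(n + cornerShift r k) j| ≤ ((2 * r : ℕ) : ℤ) := by
  have (a : ℤ) (ha : |a| ≤ ((6 * r : ℕ) : ℤ)) :
      ∃ k : Fin 3, |a + 4 * r * ((k : ℤ) - 1)| ≤ ((2 * r : ℕ) : ℤ) := by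
    rw [abs_le] at ha
    push_cast at ha ⊢
    simp only [abs_le]
    by_cases h₁ : a < -(2 * r)
    · exact ⟨2, by norm_num; omega⟩
    by_cases h₂ : 2 * r < a
    · exact ⟨0, by norm_num; omega⟩
    · exact ⟨1, by norm_num; omega⟩
  choose k hk using fun j => this (n j) (hn j)
  exact ⟨k, hk⟩

lemma VAddSeparated.isTiling [Fintype ι] [AddAction (ι → ℤ) X] {r : ℕ} {U : Set X}
    (hUsep : VAddSeparated {g : ι → ℤ | ∀ j, |g j| ≤ ((6 * r : ℕ) : ℤ)} U)
    (hUcover : vaddShadow {g : ι → ℤ | ∀ j, |g j| ≤ ((6 * r : ℕ) : ℤ)} U = univ)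
    (s : ι → ℤ) (x : X) : IsTiling r (2 * r) (6 * r) {c | (c - s) +ᵥ x ∈ U} := by
  refine isTiling_of_exists_lt_abs_sub (M := 6 * r) (by omega) (fun c₁ h₁ c₂ h₂ hne => ?_) ?_
  · by_contra! h
    exact hne (sub_left_injective (hUsep.eq_of_sub_mem h₁ h₂ fun j => by
      simpa [abs_sub_comm] using h j))
  · obtain ⟨n, hn, hnx⟩ := mem_vaddShadow.1 (hUcover.symm ▸ mem_univ (-s +ᵥ x))
    exact ⟨n, show (n - s) +ᵥ x ∈ U by rwa [sub_eq_add_neg, ← vadd_vadd], hn⟩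

end Lattice

/-- for a free continuous `ℤ^d`-action on the Cantor set `X` and any
`N ∈ ℕ`, there exist continuous equivariant maps `x ↦ T_i x`, `i = 0, ..., 3^d − 1`,
taking values in `(r, D, E)`-tilings of `ℤ^d` for some `r, D, E ∈ ℕ` with `r > N√d`,
such that the sets `Ω_i = {x : 0 ∈ Dom (T_i x)}` cover `X`. -/
theorem stmt_13 (d N : ℕ) (X : Type*) [TopologicalSpace X]
    (hCantor : Nonempty (X ≃ₜ (ℕ → Bool)))
    (act : X → (Fin d → ℤ) → X)
    (hact0 : ∀ x, act x 0 = x)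
    (hactadd : ∀ x m n, act (act x m) n = act x (m + n))
    (hactc : ∀ n, Continuous fun x => act x n)
    (hfree : ∀ x n, act x n = x → n = 0) :
    ∃ r D E : ℕ, (N : ℝ) * Real.sqrt d < (r : ℝ) ∧
      ∃ T : Fin (3 ^ d) → X → Set (Fin d → ℤ),
        -- each T i is continuous
        (∀ i, ∀ x : X, ∀ R : ℝ, 0 < R → ∃ U : Set X, IsOpen U ∧ x ∈ U ∧ ∀ y ∈ U,
          T i y ∩ {n | Real.sqrt (∑ j, ((n j : ℝ)) ^ 2) ≤ R} =
          T i x ∩ {n | Real.sqrt (∑ j, ((n j : ℝ)) ^ 2) ≤ R}) ∧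
        -- each T i is equivariant
        (∀ i, ∀ x n, T i (act x n) = {c | c + n ∈ T i x}) ∧
        -- each T i x is an (r, D, E)-tiling
        (∀ i, ∀ x : X,
          (∀ c₁ ∈ T i x, ∀ c₂ ∈ T i x, c₁ ≠ c₂ →
            ∀ m : Fin d → ℤ, ¬ ((∀ j, |m j - c₁ j| ≤ (D : ℤ)) ∧ (∀ j, |m j - c₂ j| ≤ (D : ℤ)))) ∧
          (∀ c₁ ∈ T i x, ∀ c₂ ∈ T i x, c₁ ≠ c₂ →
            ∀ m₁ m₂ : Fin d → ℤ, (∀ j, |m₁ j - c₁ j| ≤ (D : ℤ)) →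
              (∀ j, |m₂ j - c₂ j| ≤ (D : ℤ)) →
              (r : ℝ) ≤ Real.sqrt (∑ j, ((m₁ j - m₂ j : ℤ) : ℝ) ^ 2)) ∧
          (∃ m : Fin d → ℤ, (∃ c ∈ T i x, ∀ j, |m j - c j| ≤ (D : ℤ)) ∧ ∀ j, |m j| ≤ (E : ℤ))) ∧
        -- the sets Ω_i cover X
        (⋃ i, {x | ∃ c ∈ T i x, ∀ j, |c j| ≤ (D : ℤ)}) = Set.univ := by
  obtain ⟨e⟩ := hCantor
  have : CompactSpace X := e.symm.compactSpace
  have : T2Space X := e.isEmbedding.t2Space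
  have : TotallyDisconnectedSpace X := e.symm.totallyDisconnectedSpace
  let : AddAction (Fin d → ℤ) X :=
    { vadd := fun n x => act x n
      zero_vadd := hact0
      add_vadd := fun m n x => by
        show act x (m + n) = act (act x n) m
        rw [hactadd, add_comm] }
  have : ContinuousConstVAdd (Fin d → ℤ) X := ⟨hactc⟩
  obtain ⟨r, hr⟩ := exists_nat_gt ((N : ℝ) * √d)
  obtain ⟨U, hUc, hUsep, hUcover⟩ := exists_isClopen_vaddSeparated_vaddShadow_eq_univ
    (fun n x => hfree x n) (finite_setOf_forall_abs_le ((6 * r : ℕ) : ℤ)) (by simp)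
    (fun g hg j => by simpa using hg j)
  let shift (i : Fin (3 ^ d)) := cornerShift r (finFunctionFinEquiv.symm i)
  refine ⟨r, 2 * r, 6 * r, hr, fun i x => {c | (c - shift i) +ᵥ x ∈ U},
    fun i x R _ => hUc.exists_isOpen_forall_inter_eq _ (finite_setOf_sqrt_sum_sq_le R) x, ?_, ?_, ?_⟩
  · intro i x n
    ext c
    show (c - shift i) +ᵥ n +ᵥ x ∈ U ↔ (c + n - shift i) +ᵥ x ∈ U
    rw [vadd_vadd, sub_add_eq_add_sub]
  · exact fun i x => hUsep.isTiling hUcover (shift i) x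
  · refine eq_univ_of_forall fun x => ?_
    obtain ⟨n, hn, hnx⟩ := mem_vaddShadow.1 (hUcover.symm ▸ mem_univ x)
    obtain ⟨k, hk⟩ := exists_abs_add_cornerShift_le r hn
    refine mem_iUnion.2 ⟨finFunctionFinEquiv k, n + cornerShift r k, ?_, hk⟩
    simpa [shift] using hnx
end

section
/- Any extension of a free continuous ℤ^d-action on the Cantor set has dynamical asymptotic dimension at most 3^d − 1. -/
/-- The reachable set of `x` by `F`-paths staying in `U` (additive group version). -/
def reachSet {Γ X : Type*} [AddGroup Γ] (act : X → Γ → X) (F : Finset Γ) (U : Set X)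
    (x : X) : Set X :=
  {y | ∃ l : List Γ, l ≠ [] ∧ (∀ γ ∈ l, γ ∈ F) ∧ y = act x l.sum ∧
    ∀ k, 1 ≤ k → k ≤ l.length → act x (l.take k).sum ∈ U}

/-- The dynamical asymptotic dimension of `act` is at most `m`. -/
def DADle {Γ X : Type*} [AddGroup Γ] [TopologicalSpace X] (act : X → Γ → X) (m : ℕ) : Prop :=
  ∀ F : Finset Γ, ∃ U : Fin (m + 1) → Set X, (∀ i, IsOpen (U i)) ∧ (⋃ i, U i) = Set.univ ∧
    ∃ M : ℕ, ∀ i, ∀ x ∈ U i,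
      (reachSet act F (U i) x).Finite ∧ (reachSet act F (U i) x).ncard ≤ M

/-- The dynamical asymptotic dimension of an action, as an extended natural number. -/
noncomputable def DAD {Γ X : Type*} [AddGroup Γ] [TopologicalSpace X] (act : X → Γ → X) : ℕ∞ :=
  sInf {m : ℕ∞ | ∃ k : ℕ, m = (k : ℕ∞) ∧ DADle act k}

/-!
A free `ℤ^d`-action on the Cantor set has, for every `L`, a clopen marker set `A`: no nonzero
element of the cube `[-L, L]^d` moves a point of `A` into `A`, and every orbit meets `A` within
that cube. It is assembled greedily from a finite clopen cover by sets with the first property.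
Colour each point by the offset of a chosen nearby marker, each coordinate quantised into thirds
of `[-L, L]`: this gives `3^d` clopen colour classes. With `L = 3R + 1` and `F ⊆ [-R, R]^d`, a step
by `F` between two points of the same colour changes the chosen marker by an element of
`[-3R, 3R]^d`, so by separation not at all; hence the points reachable by `F`-paths inside a colour
class lie in the `L`-cube around a single marker.

For an extension, pull the colour classes back along the factor map: freeness downstairs makes the
factor map injective on orbits, so reach sets upstairs are no larger than downstairs.
-/

open Set Pointwise Topology

section Extension

variable {Γ X Y : Type*} [AddGroup Γ]

theorem image_reachSet_subset_reachSet {actX : X → Γ → X} {actY : Y → Γ → Y} {π : X → Y}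
    (hπ : ∀ x g, π (actX x g) = actY (π x) g) (F : Finset Γ) (U : Set Y) (x : X) :
    π '' reachSet actX F (π ⁻¹' U) x ⊆ reachSet actY F U (π x) := by
  rintro _ ⟨_, ⟨l, hl, hlF, rfl, hU⟩, rfl⟩
  exact ⟨l, hl, hlF, hπ x l.sum, fun k hk hkl => hπ x _ ▸ hU k hk hkl⟩

theorem injOn_reachSet {actX : X → Γ → X} {actY : Y → Γ → Y} {π : X → Y}
    (hπ : ∀ x g, π (actX x g) = actY (π x) g) (horbit : ∀ y, Function.Injective (actY y))
    (F : Finset Γ) (U : Set X) (x : X) : InjOn π (reachSet actX F U x) := by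
  rintro _ ⟨l₁, -, -, rfl, -⟩ _ ⟨l₂, -, -, rfl, -⟩ h
  rw [hπ, hπ] at h
  rw [horbit _ h]

theorem DADle.of_extension [TopologicalSpace X] [TopologicalSpace Y] {actX : X → Γ → X}
    {actY : Y → Γ → Y} {π : X → Y} (hπc : Continuous π) (hπ : ∀ x g, π (actX x g) = actY (π x) g)
    (horbit : ∀ y, Function.Injective (actY y)) {m : ℕ} (h : DADle actY m) : DADle actX m := by
  intro F
  obtain ⟨V, hVo, hVcover, M, hM⟩ := h F
  refine ⟨fun i => π ⁻¹' V i, fun i => (hVo i).preimage hπc, ?_, M, fun i x hx => ?_⟩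
  · rw [← preimage_iUnion, hVcover, preimage_univ]
  obtain ⟨hfin, hcard⟩ := hM i (π x) hx
  have himg := image_reachSet_subset_reachSet hπ F (V i) x
  have hinj := injOn_reachSet hπ horbit F (π ⁻¹' V i) x
  refine ⟨Finite.of_finite_image (hfin.subset himg) hinj, ?_⟩
  calc (reachSet actX F (π ⁻¹' V i) x).ncard
      = (π '' reachSet actX F (π ⁻¹' V i) x).ncard := hinj.ncard_image.symm
    _ ≤ (reachSet actY F (V i) (π x)).ncard := ncard_le_ncard himg hfin
    _ ≤ M := hcard

end Extension

theorem finite_and_ncard_le_of_subset_image {α β : Type*} {s : Set β} {t : Finset α} {f : α → β}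
    (h : s ⊆ f '' t) : s.Finite ∧ s.ncard ≤ t.card := by
  have hfin := t.finite_toSet.image f
  refine ⟨hfin.subset h, ?_⟩
  calc s.ncard ≤ (f '' t).ncard := ncard_le_ncard h hfin
    _ ≤ (t : Set α).ncard := ncard_image_le t.finite_toSet
    _ = t.card := ncard_coe_finset t

theorem DADle.of_isLocallyConstant {Γ X ι : Type*} [AddGroup Γ] [TopologicalSpace X] [Fintype ι]
    {act : X → Γ → X} {m : ℕ} (hι : Fintype.card ι = m + 1)
    (h : ∀ F : Finset Γ, ∃ c : X → ι, IsLocallyConstant c ∧ ∃ M : ℕ, ∀ x,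
      (reachSet act F {y | c y = c x} x).Finite ∧ (reachSet act F {y | c y = c x} x).ncard ≤ M) :
    DADle act m := by
  intro F
  obtain ⟨c, hc, M, hM⟩ := h F
  let e := Fintype.equivFinOfCardEq hι
  refine ⟨fun i => {y | e (c y) = i}, fun i => (hc.comp e).isOpen_fiber i,
    eq_univ_of_forall fun y => mem_iUnion.2 ⟨e (c y), rfl⟩, M, ?_⟩
  rintro _ x rfl
  simpa only [e.apply_eq_iff_eq] using hM x

theorem reachSet_vadd_subset_of_invariant {Γ Y β : Type*} [AddCommGroup Γ] [AddAction Γ Y]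
    {F : Finset Γ} {U : Set Y} {f : Y → β}
    (hf : ∀ y ∈ U, ∀ g ∈ F, g +ᵥ y ∈ U → f (g +ᵥ y) = f y) {x : Y} (hx : x ∈ U) :
    reachSet (fun y g => g +ᵥ y) F U x ⊆ {y | f y = f x} := by
  rintro _ ⟨l, -, hlF, rfl, hU⟩
  have hmem : ∀ k ≤ l.length, (l.take k).sum +ᵥ x ∈ U := fun k hk => by
    rcases k.eq_zero_or_pos with rfl | hk0
    · simpa using hx
    · exact hU k hk0 hk
  suffices ∀ k ≤ l.length, f ((l.take k).sum +ᵥ x) = f x by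
    simpa using this l.length le_rfl
  intro k hk
  induction k with
  | zero => simp
  | succ k ih =>
    have hstep : (l.take (k + 1)).sum +ᵥ x = l[k] +ᵥ ((l.take k).sum +ᵥ x) := by
      rw [List.sum_take_succ, add_comm, add_vadd]
    rw [hstep, hf _ (hmem k (by omega)) _ (hlF _ (List.getElem_mem _)) (hstep ▸ hmem (k + 1) hk),
      ih (by omega)]

section Marker

variable {Γ Y : Type*} [AddGroup Γ] [AddAction Γ Y]

theorem vadd_left_injective_of_free (hfree : ∀ (g : Γ) (y : Y), g +ᵥ y = y → g = 0) (y : Y) :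
    Function.Injective fun g : Γ => g +ᵥ y := by
  intro g h (hgh : g +ᵥ y = h +ᵥ y)
  have : (-h + g) +ᵥ y = y := by rw [add_vadd, hgh, neg_vadd_vadd]
  exact (neg_add_eq_zero.1 (hfree _ y this)).symm

def IsSeparatedBy (S : Set Γ) (A : Set Y) : Prop :=
  ∀ a ∈ A, ∀ g ∈ S, g +ᵥ a ∈ A → g = 0

theorem isSeparatedBy_empty (S : Set Γ) : IsSeparatedBy S (∅ : Set Y) :=
  fun _ ha => ha.elim

theorem IsSeparatedBy.union_diff_vadd {S : Set Γ} {A C : Set Y} (hS : ∀ g ∈ S, -g ∈ S)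
    (hA : IsSeparatedBy S A) (hC : IsSeparatedBy S C) :
    IsSeparatedBy S (A ∪ (C \ (S +ᵥ A))) := by
  rintro a (ha | ⟨haC, haS⟩) g hg (hga | ⟨hgaC, hgaS⟩)
  · exact hA a ha g hg hga
  · exact (hgaS (vadd_mem_vadd hg ha)).elim
  · exact (haS (neg_vadd_vadd g a ▸ vadd_mem_vadd (hS g hg) hga)).elim
  · exact hC a haC g hg hgaC

theorem union_subset_vadd_union_diff_vadd {S : Set Γ} (hS0 : 0 ∈ S) (A C : Set Y) :
    (S +ᵥ A) ∪ C ⊆ S +ᵥ (A ∪ (C \ (S +ᵥ A))) := by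
  intro y hy
  by_cases h : y ∈ S +ᵥ A
  · exact vadd_subset_vadd_left subset_union_left h
  · exact ⟨0, hS0, y, Or.inr ⟨hy.resolve_left h, h⟩, zero_vadd Γ y⟩

variable [TopologicalSpace Y] [ContinuousConstVAdd Γ Y]

theorem IsClopen.vadd_left_of_finite {S : Set Γ} (hS : S.Finite) {A : Set Y} (hA : IsClopen A) :
    IsClopen (S +ᵥ A) := by
  rw [← iUnion_vadd_left_image]
  exact hS.isClopen_biUnion fun g _ => ⟨hA.isClosed.vadd g, hA.isOpen.vadd g⟩

theorem exists_isClopen_mem_isSeparatedBy [TotallySeparatedSpace Y]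
    (hfree : ∀ (g : Γ) (y : Y), g +ᵥ y = y → g = 0) {S : Set Γ} (hS : S.Finite) (y : Y) :
    ∃ V : Set Y, IsClopen V ∧ y ∈ V ∧ IsSeparatedBy S V := by
  have hW : ∀ g ∈ S \ {0}, ∃ W : Set Y, IsClopen W ∧ y ∈ W ∧ g +ᵥ y ∈ Wᶜ := fun g hg =>
    exists_isClopen_of_totally_separated fun h => hg.2 (hfree g y h.symm)
  choose! W hWc hyW hgyW using hW
  refine ⟨⋂ g ∈ S \ {0}, W g ∩ (g +ᵥ ·) ⁻¹' (W g)ᶜ,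
    hS.sdiff.isClopen_biInter fun g hg =>
      (hWc g hg).inter ((hWc g hg).compl.preimage (continuous_const_vadd g)),
    mem_iInter₂.2 fun g hg => ⟨hyW g hg, hgyW g hg⟩, fun a ha g hg hga => ?_⟩
  by_contra h0
  exact (mem_iInter₂.1 ha g ⟨hg, h0⟩).2 (mem_iInter₂.1 hga g ⟨hg, h0⟩).1

theorem exists_isClopen_isSeparatedBy_forall_exists_vadd_mem [CompactSpace Y]
    [TotallySeparatedSpace Y] (hfree : ∀ (g : Γ) (y : Y), g +ᵥ y = y → g = 0) {S : Set Γ}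
    (hS : S.Finite) (hS0 : 0 ∈ S) (hSneg : ∀ g ∈ S, -g ∈ S) :
    ∃ A : Set Y, IsClopen A ∧ IsSeparatedBy S A ∧ ∀ y, ∃ g ∈ S, g +ᵥ y ∈ A := by
  classical
  choose V hVc hyV hVS using exists_isClopen_mem_isSeparatedBy hfree hS
  obtain ⟨t, ht⟩ := isCompact_univ.elim_finite_subcover V (fun y => (hVc y).isOpen)
    fun y _ => mem_iUnion.2 ⟨y, hyV y⟩
  have greedy : ∀ s : Finset Y,
      ∃ A : Set Y, IsClopen A ∧ IsSeparatedBy S A ∧ ⋃ y ∈ s, V y ⊆ S +ᵥ A := by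
    intro s
    induction s using Finset.induction_on with
    | empty => exact ⟨∅, isClopen_empty, isSeparatedBy_empty S, by simp⟩
    | insert y s _ ih =>
      obtain ⟨A, hAc, hAS, hsA⟩ := ih
      have hgrow := union_subset_vadd_union_diff_vadd hS0 A (V y)
      refine ⟨A ∪ (V y \ (S +ᵥ A)), hAc.union ((hVc y).diff (hAc.vadd_left_of_finite hS)),
        hAS.union_diff_vadd hSneg (hVS y), ?_⟩
      rw [Finset.set_biUnion_insert]
      exact union_subset (subset_union_right.trans hgrow)
        ((hsA.trans subset_union_left).trans hgrow)
  obtain ⟨A, hAc, hAS, htA⟩ := greedy t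
  refine ⟨A, hAc, hAS, fun y => ?_⟩
  obtain ⟨g, hg, a, ha, rfl⟩ := htA (ht (mem_univ y))
  exact ⟨-g, hSneg g hg, by rwa [neg_vadd_vadd]⟩

end Marker

noncomputable def cube (d L : ℕ) : Finset (Fin d → ℤ) :=
  Fintype.piFinset fun _ => Finset.Icc (-(L : ℤ)) L

section Cube

variable {d L : ℕ} {g : Fin d → ℤ}

theorem mem_cube : g ∈ cube d L ↔ ∀ i, (g i).natAbs ≤ L := by
  simp only [cube, Fintype.mem_piFinset, Finset.mem_Icc]
  exact forall_congr' fun i => by omega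

theorem zero_mem_cube : (0 : Fin d → ℤ) ∈ cube d L :=
  mem_cube.2 fun _ => by simp

theorem neg_mem_cube (hg : g ∈ cube d L) : -g ∈ cube d L :=
  mem_cube.2 fun i => by simpa using mem_cube.1 hg i

theorem exists_subset_cube (F : Finset (Fin d → ℤ)) : ∃ R, F ⊆ cube d R :=
  ⟨F.sup fun g => Finset.univ.sup fun i => (g i).natAbs, fun g hg => mem_cube.2 fun i =>
    (Finset.le_sup (f := fun i => (g i).natAbs) (Finset.mem_univ i)).trans
      (Finset.le_sup (f := fun g => Finset.univ.sup fun i => (g i).natAbs) hg)⟩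

end Cube

-- For `|t| ≤ 3R + 1` the `min` is inactive, since `2(3R + 1) + 1 = 3(2R + 1)`; it only makes the
-- value land in `Fin 3`.
def third (R : ℕ) (t : ℤ) : Fin 3 :=
  ⟨min ((t + (3 * R + 1)).toNat / (2 * R + 1)) 2, by omega⟩

theorem natAbs_sub_le_of_third_eq {R : ℕ} {s t : ℤ} (hs : s.natAbs ≤ 3 * R + 1)
    (ht : t.natAbs ≤ 3 * R + 1) (h : third R s = third R t) : (s - t).natAbs ≤ 2 * R := by
  obtain ⟨x, hx⟩ : ∃ x : ℕ, (x : ℤ) = s + (3 * R + 1) := ⟨_, Int.toNat_of_nonneg (by omega)⟩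
  obtain ⟨y, hy⟩ : ∃ y : ℕ, (y : ℤ) = t + (3 * R + 1) := ⟨_, Int.toNat_of_nonneg (by omega)⟩
  have hxB : x / (2 * R + 1) < 3 := (Nat.div_lt_iff_lt_mul (by omega)).2 (by omega)
  have hyB : y / (2 * R + 1) < 3 := (Nat.div_lt_iff_lt_mul (by omega)).2 (by omega)
  have hq : x / (2 * R + 1) = y / (2 * R + 1) := by
    have := congrArg Fin.val h
    simp only [third, ← hx, ← hy, Int.toNat_natCast] at this
    omega
  have := Nat.div_add_mod x (2 * R + 1)
  have := Nat.div_add_mod y (2 * R + 1)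
  have := Nat.mod_lt x (show 0 < 2 * R + 1 by omega)
  have := Nat.mod_lt y (show 0 < 2 * R + 1 by omega)
  generalize y / (2 * R + 1) = q at *
  subst hq
  omega

theorem IsClopen.eventually_mem_iff {X : Type*} [TopologicalSpace X] {s : Set X} (hs : IsClopen s)
    (x : X) : ∀ᶠ y in 𝓝 x, (y ∈ s ↔ x ∈ s) := by
  by_cases hx : x ∈ s
  · filter_upwards [hs.isOpen.mem_nhds hx] with y hy using iff_of_true hy hx
  · filter_upwards [hs.compl.isOpen.mem_nhds hx] with y hy using iff_of_false hy hx

section MarkerOffset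

variable {Γ Y : Type*} [AddGroup Γ] [AddAction Γ Y]

noncomputable def markerOffset (A : Set Y) (S : Finset Γ) (y : Y) : Γ :=
  Classical.epsilon fun g => g ∈ S ∧ g +ᵥ y ∈ A

theorem markerOffset_spec {A : Set Y} {S : Finset Γ} (hA : ∀ y, ∃ g ∈ S, g +ᵥ y ∈ A) (y : Y) :
    markerOffset A S y ∈ S ∧ markerOffset A S y +ᵥ y ∈ A :=
  Classical.epsilon_spec (hA y)

theorem isLocallyConstant_markerOffset [TopologicalSpace Y] [ContinuousConstVAdd Γ Y]
    {A : Set Y} (hA : IsClopen A) (S : Finset Γ) : IsLocallyConstant (markerOffset A S) := by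
  rw [IsLocallyConstant.iff_eventually_eq]
  intro y
  have hnear : ∀ᶠ w in 𝓝 y, ∀ g ∈ S, (g +ᵥ w ∈ A ↔ g +ᵥ y ∈ A) :=
    (Filter.eventually_all_finset _).2 fun g _ =>
      (hA.preimage (continuous_const_vadd g)).eventually_mem_iff y
  filter_upwards [hnear] with w hw
  unfold markerOffset
  congr 1
  ext g
  exact and_congr_right (hw g)

end MarkerOffset

theorem markerOffset_vadd_vadd_eq {d : ℕ} {Y : Type*} [AddAction (Fin d → ℤ) Y] {A : Set Y}
    {R : ℕ} (hsep : IsSeparatedBy (cube d (3 * R + 1) : Set (Fin d → ℤ)) A)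
    (hnet : ∀ y, ∃ g ∈ cube d (3 * R + 1), g +ᵥ y ∈ A) {v : Fin d → ℤ} (hv : v ∈ cube d R)
    {y : Y} (hc : ∀ i, third R (markerOffset A (cube d (3 * R + 1)) (v +ᵥ y) i) =
      third R (markerOffset A (cube d (3 * R + 1)) y i)) :
    markerOffset A (cube d (3 * R + 1)) (v +ᵥ y) +ᵥ v +ᵥ y =
      markerOffset A (cube d (3 * R + 1)) y +ᵥ y := by
  obtain ⟨ha, haA⟩ := markerOffset_spec hnet y
  obtain ⟨hb, hbA⟩ := markerOffset_spec hnet (v +ᵥ y)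
  set a := markerOffset A (cube d (3 * R + 1)) y
  set b := markerOffset A (cube d (3 * R + 1)) (v +ᵥ y)
  have hw : b + v - a ∈ cube d (3 * R + 1) := mem_cube.2 fun i => by
    have := natAbs_sub_le_of_third_eq (mem_cube.1 hb i) (mem_cube.1 ha i) (hc i)
    have := mem_cube.1 hv i
    simp only [Pi.sub_apply, Pi.add_apply]
    omega
  have hmove : (b + v - a) +ᵥ (a +ᵥ y) = b +ᵥ v +ᵥ y := by
    rw [vadd_vadd, vadd_vadd, sub_add_cancel]
  have hba : b + v = a := sub_eq_zero.1 (hsep _ haA _ hw (hmove ▸ hbA))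
  rw [vadd_vadd, hba]

theorem DADle.vadd_of_free {d : ℕ} {Y : Type*} [TopologicalSpace Y] [CompactSpace Y]
    [TotallySeparatedSpace Y] [AddAction (Fin d → ℤ) Y] [ContinuousConstVAdd (Fin d → ℤ) Y]
    (hfree : ∀ (g : Fin d → ℤ) (y : Y), g +ᵥ y = y → g = 0) :
    DADle (fun (y : Y) (g : Fin d → ℤ) => g +ᵥ y) (3 ^ d - 1) := by
  have hcard : Fintype.card (Fin d → Fin 3) = 3 ^ d - 1 + 1 := by
    have := Nat.one_le_pow d 3 (by norm_num)
    simp only [Fintype.card_fun, Fintype.card_fin]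
    omega
  refine DADle.of_isLocallyConstant hcard fun F => ?_
  obtain ⟨R, hFR⟩ := exists_subset_cube F
  set L := 3 * R + 1
  obtain ⟨A, hAc, hsep, hnet⟩ := exists_isClopen_isSeparatedBy_forall_exists_vadd_mem hfree
    (cube d L).finite_toSet zero_mem_cube fun g hg => neg_mem_cube hg
  set colour : Y → Fin d → Fin 3 := fun y i => third R (markerOffset A (cube d L) y i)
  refine ⟨colour, (isLocallyConstant_markerOffset hAc _).comp fun (a : Fin d → ℤ) i =>
    third R (a i), (cube d L).card, fun x => ?_⟩
  set p := markerOffset A (cube d L) x +ᵥ x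
  refine finite_and_ncard_le_of_subset_image (f := fun g => -g +ᵥ p) ?_
  refine (reachSet_vadd_subset_of_invariant (U := {y | colour y = colour x})
    (f := fun y => markerOffset A (cube d L) y +ᵥ y) (fun y hy g hg hgy =>
      markerOffset_vadd_vadd_eq hsep hnet (hFR hg) (congrFun (hgy.trans hy.symm))) rfl).trans ?_
  rintro z (hz : _ = p)
  exact ⟨markerOffset A (cube d L) z, (markerOffset_spec hnet z).1,
    by simp only [← hz, neg_vadd_vadd]⟩

theorem stmt_15_general (d : ℕ) (X Y : Type*) [TopologicalSpace X] [TopologicalSpace Y]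
    (hCantor : Nonempty (Y ≃ₜ (ℕ → Bool)))
    (actX : X → (Fin d → ℤ) → X) (actY : Y → (Fin d → ℤ) → Y)
    (hY0 : ∀ y, actY y 0 = y)
    (hYadd : ∀ y m n, actY (actY y m) n = actY y (m + n))
    (hYc : ∀ n, Continuous fun y => actY y n)
    (hfree : ∀ y n, actY y n = y → n = 0)
    (π : X → Y) (hπc : Continuous π)
    (hπ : ∀ x n, π (actX x n) = actY (π x) n) :
    DAD actX ≤ ((3 ^ d - 1 : ℕ) : ℕ∞) := by
  obtain ⟨e⟩ := hCantor
  have : CompactSpace Y := e.symm.compactSpace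
  have : T2Space Y := e.symm.t2Space
  have : TotallyDisconnectedSpace Y := e.symm.totallyDisconnectedSpace
  let : AddAction (Fin d → ℤ) Y :=
    { vadd g y := actY y g
      zero_vadd := hY0
      add_vadd g h y := (congrArg (actY y) (add_comm g h)).trans (hYadd y h g).symm }
  have : ContinuousConstVAdd (Fin d → ℤ) Y := ⟨hYc⟩
  have hfree' : ∀ (g : Fin d → ℤ) (y : Y), g +ᵥ y = y → g = 0 := fun g y => hfree y g
  have hY : DADle actY (3 ^ d - 1) := DADle.vadd_of_free hfree'
  exact sInf_le ⟨_, rfl, hY.of_extension hπc hπ (vadd_left_injective_of_free hfree')⟩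

/-- any extension `X ⟵ ℤ^d` of a free continuous `ℤ^d`-action on the
Cantor set `Y` has dynamical asymptotic dimension at most `3^d − 1`. -/
theorem stmt_15 (d : ℕ) (X Y : Type*) [TopologicalSpace X] [TopologicalSpace Y]
    (hCantor : Nonempty (Y ≃ₜ (ℕ → Bool)))
    (actX : X → (Fin d → ℤ) → X) (actY : Y → (Fin d → ℤ) → Y)
    (hX0 : ∀ x, actX x 0 = x)
    (hXadd : ∀ x m n, actX (actX x m) n = actX x (m + n))
    (hXc : ∀ n, Continuous fun x => actX x n)
    (hY0 : ∀ y, actY y 0 = y)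
    (hYadd : ∀ y m n, actY (actY y m) n = actY y (m + n))
    (hYc : ∀ n, Continuous fun y => actY y n)
    (hfree : ∀ y n, actY y n = y → n = 0)
    (π : X → Y) (hπc : Continuous π) (hπs : Function.Surjective π)
    (hπ : ∀ x n, π (actX x n) = actY (π x) n) :
    DAD actX ≤ ((3 ^ d - 1 : ℕ) : ℕ∞) :=
  stmt_15_general d X Y hCantor actX actY hY0 hYadd hYc hfree π hπc hπ
end
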